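/- (K^# is strictly more expressive than graded modal logic.) There is no graded modal logic formula χ such that for every finite pointed labeled graph (G,u): (G,u) satisfies χ if and only if the number of successors of u satisfying p is at least the number of successors of u satisfying q. Hence no graded modal formula is equivalent to the K^# formula #p − #q ≥ 0. -/

import Mathlib

open scoped Classical

/-- A finite labeled directed graph: edges and a valuation of atomic
propositions (indexed by `ℕ`) at each vertex. -/
structure LGraph (V : Type) [Fintype V] where
  edge : V → V → Bool
  label : V → ℕ → Bool

mutual
/-- Formulas of the logic `K^#`. -/
inductive KForm : Type where
  | atom : ℕ → KForm
  | not : KForm → KForm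
  | or : KForm → KForm → KForm
  | ge0 : KExpr → KForm
/-- Expressions of the logic `K^#`. -/
inductive KExpr : Type where
  | const : ℤ → KExpr
  | ind : KForm → KExpr
  | count : KForm → KExpr
  | add : KExpr → KExpr → KExpr
  | scale : ℤ → KExpr → KExpr
end

mutual
/-- Truth of a `K^#` formula at a pointed graph. -/
def KForm.sat {V : Type} [Fintype V] (G : LGraph V) (u : V) : KForm → Bool
  | .atom p => G.label u p
  | .not φ => !(KForm.sat G u φ)
  | .or φ ψ => KForm.sat G u φ || KForm.sat G u ψ
  | .ge0 E => decide (0 ≤ KExpr.val G u E)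
/-- Value of a `K^#` expression at a pointed graph. -/
def KExpr.val {V : Type} [Fintype V] (G : LGraph V) (u : V) : KExpr → ℤ
  | .const c => c
  | .ind φ => if KForm.sat G u φ then 1 else 0
  | .count φ =>
      ((Finset.univ.filter (fun v => G.edge u v = true ∧ KForm.sat G v φ = true)).card : ℤ)
  | .add E₁ E₂ => KExpr.val G u E₁ + KExpr.val G u E₂
  | .scale c E => c * KExpr.val G u E
end

/-- Formulas of graded modal logic: `◇^{≥k} χ` means “at least `k` successors
satisfy `χ`”. -/
inductive GForm : Type where
  | atom : ℕ → GForm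
  | not : GForm → GForm
  | or : GForm → GForm → GForm
  | dia : ℕ → GForm → GForm

/-- Truth of a graded modal formula at a pointed graph. -/
def GForm.sat {V : Type} [Fintype V] (G : LGraph V) (u : V) : GForm → Bool
  | .atom p => G.label u p
  | .not χ => !(GForm.sat G u χ)
  | .or χ₁ χ₂ => GForm.sat G u χ₁ || GForm.sat G u χ₂
  | .dia k χ =>
      decide (k ≤ (Finset.univ.filter
        (fun v => G.edge u v = true ∧ GForm.sat G v χ = true)).card)

/-- The number of successors of `u` in `G` satisfying `ψ`. -/
def numSucc {V : Type} [Fintype V] (G : LGraph V) (u : V) (ψ : KForm) : ℕ :=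
  (Finset.univ.filter (fun v => G.edge u v = true ∧ KForm.sat G v ψ = true)).card

/-- The `K^#` formula `#p − #q ≥ 0`, with `p` the proposition `0` and `q` the
proposition `1`. -/
def cmpForm : KForm :=
  KForm.ge0 (KExpr.add (KExpr.count (KForm.atom 0))
    (KExpr.scale (-1) (KExpr.count (KForm.atom 1))))

/-!
A graded formula only counts successors up to its largest grade `K`, and at a leaf its truth
value depends on the leaf's label alone. Take the star whose root has `K` leaves labelled `p`
and `K` (resp. `K + 1`) leaves labelled `q`: every subformula `◇^{≥k} ψ` with `k ≤ K` has the
same truth value at both roots, so `χ` cannot tell them apart, although `#q ≤ #p` holds at the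
first root and fails at the second.
-/

open Finset

namespace GForm

def maxGrade : GForm → ℕ
  | .atom _ => 0
  | .not χ => χ.maxGrade
  | .or χ₁ χ₂ => max χ₁.maxGrade χ₂.maxGrade
  | .dia k χ => max k χ.maxGrade

def leafSat (l : ℕ → Bool) : GForm → Bool
  | .atom p => l p
  | .not χ => !χ.leafSat l
  | .or χ₁ χ₂ => χ₁.leafSat l || χ₂.leafSat l
  | .dia k _ => decide (k = 0)

theorem sat_eq_leafSat {V : Type} [Fintype V] {G : LGraph V} {v : V}
    (hv : ∀ w, G.edge v w = false) (χ : GForm) :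
    GForm.sat G v χ = χ.leafSat (G.label v) := by
  induction χ with
  | atom p => rfl
  | not χ ih => simp [GForm.sat, leafSat, ih]
  | or _ _ ih₁ ih₂ => simp [GForm.sat, leafSat, ih₁, ih₂]
  | dia k χ _ => simp [GForm.sat, leafSat, hv]

end GForm

theorem Fin.card_filter_decide_val_lt (n a : ℕ) (g : Bool → Bool) :
    #{x : Fin n | g (decide (x.val < a)) = true}
      = (if g true then min n a else 0) + (if g false then n - a else 0) := by
  have hsplit (x : Fin n) :
      g (decide (x.val < a)) = if x.val < a then g true else g false := by
    split_ifs <;> simp [*]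
  have hlt := Fin.card_filter_val_lt (n := n) (m := a)
  have hsum := card_filter_add_card_filter_not (s := univ) (fun x : Fin n => x.val < a)
  simp only [hsplit]
  cases g true <;> cases g false <;> simp_all <;> omega

def starLabel (isP : Bool) (i : ℕ) : Bool :=
  decide (i = if isP then 0 else 1)

def starGraph (a b : ℕ) : LGraph (Fin (a + b + 1)) where
  edge u v := decide (u = 0 ∧ v ≠ 0)
  label v := starLabel (decide (v.val ≤ a))

theorem starGraph_card_succ_root (a b : ℕ) (g : Bool → Bool) :
    #{v | (starGraph a b).edge 0 v = true ∧ g (decide (v.val ≤ a)) = true}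
      = (if g true then a else 0) + (if g false then b else 0) := by
  rw [Fin.card_filter_univ_succ']
  simp [starGraph, Fin.succ_ne_zero, Fin.card_filter_decide_val_lt]

theorem starGraph_sat_succ_root {a b : ℕ} {v : Fin (a + b + 1)}
    (hv : (starGraph a b).edge 0 v = true) (χ : GForm) :
    GForm.sat (starGraph a b) v χ = χ.leafSat (starLabel (decide (v.val ≤ a))) := by
  apply GForm.sat_eq_leafSat
  intro w
  simp_all [starGraph]

theorem starGraph_sat_root_eq_of_min_eq (K : ℕ) {a b a' b' : ℕ} (ha : min a K = min a' K)
    (hb : min b K = min b' K) (χ : GForm) (hχ : χ.maxGrade ≤ K) :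
    GForm.sat (starGraph a b) 0 χ = GForm.sat (starGraph a' b') 0 χ := by
  induction χ with
  | atom p => rfl
  | not χ ih => simp_all [GForm.sat, GForm.maxGrade]
  | or χ₁ χ₂ ih₁ ih₂ =>
    simp only [GForm.maxGrade, max_le_iff] at hχ
    simp [GForm.sat, ih₁ hχ.1, ih₂ hχ.2]
  | dia k χ _ =>
    simp only [GForm.maxGrade, max_le_iff] at hχ
    let g : Bool → Bool := fun isP => χ.leafSat (starLabel isP)
    have hcount (a b : ℕ) :
        #{v | (starGraph a b).edge 0 v = true ∧ GForm.sat (starGraph a b) v χ = true}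
          = (if g true then a else 0) + (if g false then b else 0) := by
      rw [← starGraph_card_succ_root]
      refine congrArg card (filter_congr fun v _ => and_congr_right fun hv => ?_)
      rw [starGraph_sat_succ_root hv]
    simp only [GForm.sat, hcount, decide_eq_decide]
    split_ifs <;> omega

theorem numSucc_starGraph (a b : ℕ) :
    numSucc (starGraph a b) 0 (KForm.atom 0) = a ∧
      numSucc (starGraph a b) 0 (KForm.atom 1) = b := by
  constructor
  · exact (starGraph_card_succ_root a b (starLabel · 0)).trans (by simp [starLabel])
  · exact (starGraph_card_succ_root a b (starLabel · 1)).trans (by simp [starLabel])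

theorem sat_cmpForm_iff {V : Type} [Fintype V] (G : LGraph V) (u : V) :
    KForm.sat G u cmpForm = true ↔
      numSucc G u (KForm.atom 1) ≤ numSucc G u (KForm.atom 0) := by
  rw [cmpForm, KForm.sat, decide_eq_true_iff]
  simp only [KExpr.val, numSucc]
  omega

/-- `K^#` is strictly more expressive than graded modal logic: no graded modal
formula expresses, over finite pointed graphs, that the number of successors
satisfying `p` is at least the number of successors satisfying `q`; hence no graded
modal formula is equivalent to the `K^#` formula `#p − #q ≥ 0`. -/
theorem gml_cannot_compare_counts :
    (¬ ∃ χ : GForm,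
      ∀ (n : ℕ) (G : LGraph (Fin n)) (u : Fin n),
        (GForm.sat G u χ = true ↔
          numSucc G u (KForm.atom 1) ≤ numSucc G u (KForm.atom 0))) ∧
    (¬ ∃ χ : GForm,
      ∀ (n : ℕ) (G : LGraph (Fin n)) (u : Fin n),
        (GForm.sat G u χ = true ↔ KForm.sat G u cmpForm = true)) := by
  have hcounts : ¬ ∃ χ : GForm, ∀ (n : ℕ) (G : LGraph (Fin n)) (u : Fin n),
      (GForm.sat G u χ = true ↔
        numSucc G u (KForm.atom 1) ≤ numSucc G u (KForm.atom 0)) := by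
    rintro ⟨χ, hχ⟩
    set K := χ.maxGrade
    have hbalanced : GForm.sat (starGraph K K) 0 χ = true := by
      simp [hχ, numSucc_starGraph]
    have hunbalanced : GForm.sat (starGraph K (K + 1)) 0 χ = true := by
      rwa [← starGraph_sat_root_eq_of_min_eq K (b := K) rfl (by omega) χ le_rfl]
    simp [hχ, numSucc_starGraph] at hunbalanced
  exact ⟨hcounts, fun ⟨χ, hχ⟩ =>
    hcounts ⟨χ, fun n G u => (hχ n G u).trans (sat_cmpForm_iff G u)⟩⟩
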